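/- arXiv:2502.10553 — 2 statements merged into one kernel-verified Lean document; each statement's English description precedes it below -/
import Mathlib

section
/- Let W be a nonnegative real random variable with 0<E[W]<∞, let q≥2 be an integer, β>0, β'=e^β−1, and let B=(B_1,…,B_q) be a field with all B_i≥0. For y∈ℝ^q set G(y) = E[log(∑_{k=1}^q exp(β'·y_k·W/E[W]+B_k))] − (β'/(2E[W]))·∑_{k=1}^q y_k², and for a maximizer y of G over ℝ^q define g_{y,B}(x) = (1/x)·E[ W·exp(x·β'W/E[W]) / ∑_{j=1}^q exp(y_j·β'W/E[W]+B_j) ] on (0, y_max], where y_max = max_i y_i, and let x_*(y,B) be the minimizer of g_{y,B} on (0, y_max]. Then there exists ε>0 (depending only on β, q and the law of W) such that whenever 0 ≤ max_{i} B_i < ε, every maximizer y of G over ℝ^q has at most one coordinate y_i with y_i > x_*(y,B). -/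
/-!
At a maximizer `y` of `G`, write `κ = β'/E[W]` and `Z_y = ∑_j exp(y_j κ W + B_j)`. Moving one
coordinate `y_k` by `t` raises the log-term by at least `t κ e^{B_k} E[W e^{y_k κ W}/Z_y]`
(convexity of `exp`) and the quadratic term by `κ (y_k t + t²/2)`; since `t` is arbitrary this
forces the stationarity equation `g(y_k) = e^{-B_k}`, and `y_k > 0`.

`g` is an average of the strictly convex functions `x ↦ e^{κ W x}/x = exp(κ W x - log x)`, so it
is strictly convex and strictly increasing to the right of its minimizer `x_*`. Let `y_i ≤ y_j`
both exceed `x_*`. If `y_i < y_j`, then `e^{-B_i} = g(y_i) < g(y_j) = e^{-B_j}`, and swapping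
`y_i` and `y_j` strictly increases `G`. If `y_i = y_j`, then `B_i = B_j`. As
`x g(x) = E[W e^{κ W x}/Z_y]` is convex, `g(u) < g(y_i)` for some `u < y_i` yields
`κ E[W² e^{y_i κ W}/Z_y; W ≤ M] > g(y_i) = e^{-B_i}` for a truncation level `M` (`E[W²]` may be
infinite). Then for small `t > 0` the competitor `y + t (e_i - e_j)` gains about
`t² κ² e^{B_i} E[W² e^{y_i κ W}/Z_y; W ≤ M]` in the log-term, which exceeds the loss `κ t²` in
the quadratic term.
-/

open MeasureTheory Filter Topology Set

/-- The functional whose maximizers give the annealed pressure of the Potts model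
on rank-1 random graphs:
`G(y) = E[log ∑_k exp(β'·y_k·W/E[W] + B_k)] − (β'/(2E[W]))·∑_k y_k²` with `β' = e^β − 1`. -/
noncomputable def pottsG {Ω : Type*} [MeasurableSpace Ω] (μ : Measure Ω)
    (W : Ω → ℝ) (q : ℕ) (β : ℝ) (B : Fin q → ℝ) (y : Fin q → ℝ) : ℝ :=
  (∫ ω, Real.log (∑ k : Fin q,
      Real.exp ((Real.exp β - 1) * y k * W ω / (∫ ω', W ω' ∂μ) + B k)) ∂μ)
    - (Real.exp β - 1) / (2 * ∫ ω', W ω' ∂μ) * ∑ k : Fin q, (y k) ^ 2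

/-- The auxiliary function
`g_{y,B}(x) = (1/x)·E[W·exp(x·β'·W/E[W]) / ∑_j exp(y_j·β'·W/E[W] + B_j)]`. -/
noncomputable def pottsg {Ω : Type*} [MeasurableSpace Ω] (μ : Measure Ω)
    (W : Ω → ℝ) (q : ℕ) (β : ℝ) (B : Fin q → ℝ) (y : Fin q → ℝ) (x : ℝ) : ℝ :=
  (1 / x) * ∫ ω, W ω * Real.exp (x * (Real.exp β - 1) * W ω / (∫ ω', W ω' ∂μ)) /
      ∑ j : Fin q, Real.exp (y j * (Real.exp β - 1) * W ω / (∫ ω', W ω' ∂μ) + B j) ∂μ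

theorem Fintype.sum_update_sub_sum {ι α M : Type*} [Fintype ι] [DecidableEq ι] [AddCommGroup M]
    (F : ι → α → M) (y : ι → α) (i : ι) (a : α) :
    ∑ k, F k (Function.update y i a k) - ∑ k, F k (y k) = F i a - F i (y i) := by
  rw [← Finset.sum_sub_distrib, Fintype.sum_eq_single i fun k hk => by simp [hk]]
  simp

theorem Fintype.sum_update_update_sub_sum {ι α M : Type*} [Fintype ι] [DecidableEq ι]
    [AddCommGroup M] (F : ι → α → M) (y : ι → α) {i j : ι} (hij : i ≠ j) (a b : α) :
    ∑ k, F k (Function.update (Function.update y i a) j b k) - ∑ k, F k (y k)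
      = (F i a - F i (y i)) + (F j b - F j (y j)) := by
  rw [← Finset.sum_sub_distrib, Finset.sum_eq_add i j hij (fun k _ hk => by simp [hk.1, hk.2])
    (by simp) (by simp)]
  simp [hij]

namespace Real

theorem mul_le_log_one_add_mul_exp_sub_one {p s : ℝ} (hp0 : 0 ≤ p) (hp1 : p ≤ 1) :
    p * s ≤ log (1 + p * (exp s - 1)) := by
  have h := convexOn_exp.2 (mem_univ 0) (mem_univ s) (sub_nonneg.2 hp1) hp0 (by ring)
  simp only [smul_eq_mul, mul_zero, zero_add, exp_zero, mul_one] at h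
  have h' : exp (p * s) ≤ 1 + p * (exp s - 1) := by linarith
  exact (le_log_iff_exp_le ((exp_pos _).trans_le h')).2 h'

theorem exp_sub_exp_le_mul_exp (a b : ℝ) : exp b - exp a ≤ (b - a) * exp b := by
  have h := add_one_le_exp (a - b)
  have : exp a = exp (a - b) * exp b := by rw [← exp_add, sub_add_cancel]
  nlinarith [exp_pos b]

theorem sq_le_two_mul_cosh_sub_one (s : ℝ) : s ^ 2 ≤ 2 * (cosh s - 1) := by
  have hcosh := cosh_two_mul (s / 2)
  rw [show 2 * (s / 2) = s by ring, cosh_sq] at hcosh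
  have hsinh : (s / 2) ^ 2 ≤ sinh (s / 2) ^ 2 := by
    rw [sq_le_sq, abs_sinh]
    exact self_le_sinh_iff.2 (abs_nonneg _)
  linarith

theorem mul_one_sub_le_log_one_add {u : ℝ} (hu : 0 ≤ u) : u * (1 - u) ≤ log (1 + u) := by
  have hu1 : 0 < 1 + u := by linarith
  refine le_trans ?_ (one_sub_inv_le_log_of_pos hu1)
  rw [show 1 - (1 + u)⁻¹ = u / (1 + u) by field_simp; ring, le_div_iff₀ hu1]
  nlinarith [mul_nonneg hu (sq_nonneg u)]

theorem mul_sq_le_log_one_add_two_mul_cosh_sub_one {p s r : ℝ} (hp0 : 0 ≤ p) (hp1 : p ≤ 1)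
    (hsr : |s| ≤ r) : (1 - 2 * (cosh r - 1)) * (p * s ^ 2) ≤ log (1 + 2 * p * (cosh s - 1)) := by
  have hcosh : cosh s ≤ cosh r := cosh_le_cosh.2 (hsr.trans (le_abs_self r))
  have hlow : p * s ^ 2 ≤ 2 * p * (cosh s - 1) := by
    nlinarith [sq_le_two_mul_cosh_sub_one s]
  have hup : 2 * p * (cosh s - 1) ≤ 2 * (cosh r - 1) := by
    nlinarith [one_le_cosh s]
  have hps : 0 ≤ p * s ^ 2 := by positivity
  have hlog := mul_one_sub_le_log_one_add (hps.trans hlow)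
  rcases le_total 0 (1 - 2 * (cosh r - 1)) with hη | hη
  · nlinarith
  · nlinarith [log_nonneg (by linarith : (1 : ℝ) ≤ 1 + 2 * p * (cosh s - 1))]

theorem strictConvexOn_exp_mul_div (a : ℝ) : StrictConvexOn ℝ (Ioi 0) fun x => exp (a * x) / x := by
  have hlin : StrictConvexOn ℝ (Ioi 0) fun x : ℝ => a * x - log x :=
    ((LinearMap.mulLeft ℝ a).convexOn (convex_Ioi 0)).sub_strictConcaveOn strictConcaveOn_log_Ioi
  have hexp : ∀ x ∈ Ioi (0 : ℝ), exp (a * x) / x = exp (a * x - log x) := fun x hx => by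
    rw [exp_sub, exp_log hx]
  refine ⟨convex_Ioi 0, fun x hx y hy hxy s t hs ht hst => ?_⟩
  dsimp only
  rw [hexp x hx, hexp y hy, hexp _ (convex_Ioi 0 hx hy hs.le ht.le hst)]
  calc exp (a * (s • x + t • y) - log (s • x + t • y))
      < exp (s • (a * x - log x) + t • (a * y - log y)) := exp_lt_exp.2 (hlin.2 hx hy hxy hs ht hst)
    _ ≤ s • exp (a * x - log x) + t • exp (a * y - log y) :=
      convexOn_exp.2 (mem_univ _) (mem_univ _) hs.le ht.le hst

end Real

open Real

theorem eq_of_forall_mul_le_mul_add_sq_div_two {a b : ℝ} (h : ∀ t, t * a ≤ b * t + t ^ 2 / 2) :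
    a = b := by
  have := h (a - b)
  nlinarith [sq_nonneg (a - b)]

theorem StrictConvexOn.lt_of_isMinOn {s : Set ℝ} {f : ℝ → ℝ} {x₀ a b : ℝ}
    (hf : StrictConvexOn ℝ s f) (hmin : IsMinOn f s x₀) (hx₀ : x₀ ∈ s) (hb : b ∈ s)
    (ha : x₀ < a) (hab : a < b) : f a < f b := by
  have hslope := hf.slope_strict_mono_adjacent hx₀ hb ha hab
  have haS : a ∈ s := hf.1.ordConnected.out hx₀ hb ⟨ha.le, hab.le⟩
  have h0 : 0 ≤ (f a - f x₀) / (a - x₀) := div_nonneg (sub_nonneg.2 (hmin haS)) (by linarith)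
  exact sub_pos.1 ((div_pos_iff_of_pos_right (sub_pos.2 hab)).1 (h0.trans_lt hslope))

section Integral

variable {Ω : Type*} [MeasurableSpace Ω] {μ : Measure Ω}

theorem integral_pos_of_pos_of_ne_zero {f W : Ω → ℝ} (hsupp : 0 < μ (Function.support W))
    (hf : Integrable f μ) (hf0 : 0 ≤ f) (hpos : ∀ ω, W ω ≠ 0 → 0 < f ω) : 0 < ∫ ω, f ω ∂μ :=
  (integral_pos_iff_support_of_nonneg hf0 hf).2
    (hsupp.trans_le (measure_mono fun ω hω => (hpos ω hω).ne'))

theorem strictConvexOn_integral_mul {s : Set ℝ} {w : Ω → ℝ} {φ : Ω → ℝ → ℝ} (hw : 0 ≤ w)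
    (hφ : ∀ ω, StrictConvexOn ℝ s (φ ω)) (hsupp : 0 < μ (Function.support w))
    (hint : ∀ x ∈ s, Integrable (fun ω => w ω * φ ω x) μ) :
    StrictConvexOn ℝ s fun x => ∫ ω, w ω * φ ω x ∂μ := by
  obtain ⟨ω₀, -⟩ := nonempty_of_measure_ne_zero hsupp.ne'
  refine ⟨(hφ ω₀).1, fun x hx y hy hxy a b ha hb hab => ?_⟩
  let gap ω := a * (w ω * φ ω x) + b * (w ω * φ ω y) - w ω * φ ω (a * x + b * y)
  have hgap_int : Integrable gap μ :=
    (((hint x hx).const_mul a).add ((hint y hy).const_mul b)).sub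
      (hint _ ((hφ ω₀).1 hx hy ha.le hb.le hab))
  have hgap_pos : ∀ ω, w ω ≠ 0 → 0 < gap ω := fun ω hω => by
    have := mul_lt_mul_of_pos_left ((hφ ω).2 hx hy hxy ha hb hab) ((hw ω).lt_of_ne' hω)
    simp only [smul_eq_mul] at this
    simp only [gap]
    linarith
  have hgap_nonneg : 0 ≤ gap := fun ω => by
    by_cases hω : w ω = 0
    · simp [gap, hω]
    · exact (hgap_pos ω hω).le
  have hgap_integral : 0 < ∫ ω, gap ω ∂μ :=
    integral_pos_of_pos_of_ne_zero hsupp hgap_int hgap_nonneg hgap_pos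
  simp only [gap] at hgap_integral
  rw [integral_sub, integral_add, integral_const_mul, integral_const_mul] at hgap_integral
  · simp only [smul_eq_mul]
    linarith
  · exact (hint x hx).const_mul a
  · exact (hint y hy).const_mul b
  · exact ((hint x hx).const_mul a).add ((hint y hy).const_mul b)
  · exact hint _ ((hφ ω₀).1 hx hy ha.le hb.le hab)

theorem exists_lt_setIntegral_preimage_Iic {W f : Ω → ℝ}
    (hW : Measurable W) (hf : Integrable f μ) {c : ℝ} (hc : c < ∫ ω, f ω ∂μ) :
    ∃ M : ℕ, c < ∫ ω in W ⁻¹' Iic (M : ℝ), f ω ∂μ := by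
  have hmono : Monotone fun M : ℕ => W ⁻¹' Iic (M : ℝ) := fun M N hMN ω (hω : W ω ≤ M) =>
    hω.trans (Nat.cast_le.2 hMN)
  have hunion : (⋃ M : ℕ, W ⁻¹' Iic (M : ℝ)) = univ :=
    eq_univ_of_forall fun ω => mem_iUnion.2 (exists_nat_ge (W ω))
  have h := tendsto_setIntegral_of_monotone (fun M => hW measurableSet_Iic) hmono hf.integrableOn
  rw [hunion, Measure.restrict_univ] at h
  exact (h.eventually (eventually_gt_nhds hc)).exists

end Integral

namespace AnnealedPotts

variable {Ω ι : Type*} [Fintype ι] {W : Ω → ℝ} {κ x : ℝ} {B y : ι → ℝ} {ω : Ω}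

noncomputable def partitionFn (κ : ℝ) (W : Ω → ℝ) (B y : ι → ℝ) (ω : Ω) : ℝ :=
  ∑ k, exp (y k * κ * W ω + B k)

noncomputable def tiltedWeight (κ : ℝ) (W : Ω → ℝ) (B y : ι → ℝ) (x : ℝ) (ω : Ω) : ℝ :=
  W ω * exp (x * κ * W ω) / partitionFn κ W B y ω

noncomputable def pressureFn [MeasurableSpace Ω] (μ : Measure Ω) (κ : ℝ) (W : Ω → ℝ)
    (B y : ι → ℝ) : ℝ :=
  ∫ ω, log (partitionFn κ W B y ω) ∂μ - κ / 2 * ∑ k, y k ^ 2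

noncomputable def gFun [MeasurableSpace Ω] (μ : Measure Ω) (κ : ℝ) (W : Ω → ℝ) (B y : ι → ℝ)
    (x : ℝ) : ℝ :=
  ∫ ω, tiltedWeight κ W B y x ω / x ∂μ

section Pointwise

theorem exp_le_partitionFn (k : ι) (ω : Ω) :
    exp (y k * κ * W ω + B k) ≤ partitionFn κ W B y ω :=
  Finset.single_le_sum (f := fun k => exp (y k * κ * W ω + B k)) (fun _ _ => (exp_pos _).le)
    (Finset.mem_univ k)

theorem partitionFn_pos [Nonempty ι] (ω : Ω) : 0 < partitionFn κ W B y ω :=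
  Finset.sum_pos (fun _ _ => exp_pos _) Finset.univ_nonempty

theorem abs_log_partitionFn_le [Nonempty ι] (ω : Ω) :
    |log (partitionFn κ W B y ω)| ≤ ∑ k, |y k * κ * W ω + B k| + log (Fintype.card ι) := by
  set S := ∑ k, |y k * κ * W ω + B k|
  have hS : ∀ k, |y k * κ * W ω + B k| ≤ S := fun k =>
    Finset.single_le_sum (f := fun k => |y k * κ * W ω + B k|) (fun _ _ => abs_nonneg _)
      (Finset.mem_univ k)
  have hcard : (1 : ℝ) ≤ Fintype.card ι := Nat.one_le_cast.2 Fintype.card_pos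
  have hZ : 0 < partitionFn κ W B y ω := partitionFn_pos ω
  have hlower : -S ≤ log (partitionFn κ W B y ω) := by
    let k := Classical.arbitrary ι
    rw [le_log_iff_exp_le hZ]
    exact (exp_le_exp.2 ((neg_le_neg (hS k)).trans (neg_abs_le _))).trans (exp_le_partitionFn k ω)
  have hupper : partitionFn κ W B y ω ≤ Fintype.card ι * exp S := by
    calc partitionFn κ W B y ω ≤ ∑ _k : ι, exp S :=
          Finset.sum_le_sum fun k _ => exp_le_exp.2 ((le_abs_self _).trans (hS k))
      _ = Fintype.card ι * exp S := by simp
  have := log_le_log hZ hupper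
  rw [log_mul (by positivity) (exp_pos S).ne', log_exp] at this
  rw [abs_le]
  constructor <;> linarith [log_nonneg hcard]

theorem tiltedWeight_nonneg [Nonempty ι] (hW : 0 ≤ W ω) : 0 ≤ tiltedWeight κ W B y x ω :=
  div_nonneg (mul_nonneg hW (exp_pos _).le) (partitionFn_pos ω).le

theorem tiltedWeight_pos [Nonempty ι] (hW : 0 < W ω) : 0 < tiltedWeight κ W B y x ω :=
  div_pos (mul_pos hW (exp_pos _)) (partitionFn_pos ω)

theorem tiltedWeight_le (hκ : 0 ≤ κ) (hW : 0 ≤ W ω) {m : ι} (hx : x ≤ y m) :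
    tiltedWeight κ W B y x ω ≤ exp (-B m) * W ω := by
  have : Nonempty ι := ⟨m⟩
  have hexp : exp (x * κ * W ω) ≤ exp (-B m) * partitionFn κ W B y ω :=
    calc exp (x * κ * W ω) ≤ exp (y m * κ * W ω) := by gcongr
      _ = exp (-B m) * exp (y m * κ * W ω + B m) := by rw [← exp_add]; ring_nf
      _ ≤ exp (-B m) * partitionFn κ W B y ω := by gcongr; exact exp_le_partitionFn m ω
  rw [tiltedWeight, div_le_iff₀ (partitionFn_pos ω)]
  calc W ω * exp (x * κ * W ω) ≤ W ω * (exp (-B m) * partitionFn κ W B y ω) := by gcongr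
    _ = exp (-B m) * W ω * partitionFn κ W B y ω := by ring

theorem tiltedWeight_sub_tiltedWeight_le [Nonempty ι] (hWnn : 0 ≤ W) (u v : ℝ) (ω : Ω) :
    tiltedWeight κ W B y v ω - tiltedWeight κ W B y u ω
      ≤ (v - u) * (κ * (W ω * tiltedWeight κ W B y v ω)) := by
  have h := exp_sub_exp_le_mul_exp (u * κ * W ω) (v * κ * W ω)
  have hw : 0 ≤ W ω / partitionFn κ W B y ω := div_nonneg (hWnn ω) (partitionFn_pos ω).le
  have := mul_le_mul_of_nonneg_left h hw
  simp only [tiltedWeight]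
  linear_combination this

variable [DecidableEq ι] {i j : ι}

theorem mul_tiltedWeight_le_log_partitionFn_update (k : ι) (t : ℝ) (ω : Ω) :
    t * κ * exp (B k) * tiltedWeight κ W B y (y k) ω
      ≤ log (partitionFn κ W B (Function.update y k (y k + t)) ω)
        - log (partitionFn κ W B y ω) := by
  have : Nonempty ι := ⟨k⟩
  have hZ : 0 < partitionFn κ W B y ω := partitionFn_pos ω
  set T := exp (y k * κ * W ω + B k)
  have hupd := Fintype.sum_update_sub_sum (fun k x => exp (x * κ * W ω + B k)) y k (y k + t)
  have hZt : partitionFn κ W B (Function.update y k (y k + t)) ω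
      = partitionFn κ W B y ω + T * (exp (t * κ * W ω) - 1) := by
    unfold partitionFn at hupd ⊢
    rw [show (y k + t) * κ * W ω + B k = (y k * κ * W ω + B k) + t * κ * W ω by ring,
      exp_add] at hupd
    linarith
  rw [← log_div (partitionFn_pos ω).ne' hZ.ne', hZt,
    show (partitionFn κ W B y ω + T * (exp (t * κ * W ω) - 1)) / partitionFn κ W B y ω
      = 1 + T / partitionFn κ W B y ω * (exp (t * κ * W ω) - 1) by field_simp]
  convert mul_le_log_one_add_mul_exp_sub_one (s := t * κ * W ω)
    (div_nonneg (exp_pos _).le hZ.le) ((div_le_one hZ).2 (exp_le_partitionFn k ω)) using 1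
  simp only [tiltedWeight, exp_add]
  ring

theorem partitionFn_swap (hij : i ≠ j) (ω : Ω) :
    partitionFn κ W B (Function.update (Function.update y i (y j)) j (y i)) ω
      = partitionFn κ W B y ω
        + (exp (y j * κ * W ω) - exp (y i * κ * W ω)) * (exp (B i) - exp (B j)) := by
  have h := Fintype.sum_update_update_sub_sum (fun k x => exp (x * κ * W ω + B k)) y hij
    (y j) (y i)
  simp only [exp_add] at h
  unfold partitionFn
  simp only [exp_add]
  linear_combination h

theorem partitionFn_update_add_sub (hij : i ≠ j) (hy : y i = y j) (hB : B i = B j) (t : ℝ)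
    (ω : Ω) :
    partitionFn κ W B (Function.update (Function.update y i (y i + t)) j (y j - t)) ω
      = partitionFn κ W B y ω
        + 2 * exp (y i * κ * W ω + B i) * (cosh (t * κ * W ω) - 1) := by
  have h := Fintype.sum_update_update_sub_sum (fun k x => exp (x * κ * W ω + B k)) y hij
    (y i + t) (y j - t)
  have hpair : exp ((y i + t) * κ * W ω + B i) - exp (y i * κ * W ω + B i)
      + (exp ((y j - t) * κ * W ω + B j) - exp (y j * κ * W ω + B j))
      = 2 * exp (y i * κ * W ω + B i) * (cosh (t * κ * W ω) - 1) := by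
    rw [← hy, ← hB, cosh_eq, add_mul, add_mul, sub_mul, sub_mul, add_right_comm,
      exp_add _ (t * κ * W ω), sub_eq_add_neg (y i * κ * W ω), add_right_comm _ (-_),
      exp_add _ (-(t * κ * W ω))]
    ring
  unfold partitionFn
  linarith

theorem mul_tiltedWeight_le_log_partitionFn_update_add_sub (hij : i ≠ j) (hy : y i = y j)
    (hB : B i = B j) {t r : ℝ} {ω : Ω} (hr : |t * κ * W ω| ≤ r) :
    (1 - 2 * (cosh r - 1)) * (t ^ 2 * κ ^ 2 * exp (B i) * (W ω * tiltedWeight κ W B y (y i) ω))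
      ≤ log (partitionFn κ W B (Function.update (Function.update y i (y i + t)) j (y j - t)) ω)
        - log (partitionFn κ W B y ω) := by
  have : Nonempty ι := ⟨i⟩
  have hZ : 0 < partitionFn κ W B y ω := partitionFn_pos ω
  set T := exp (y i * κ * W ω + B i)
  rw [← log_div (partitionFn_pos ω).ne' hZ.ne', partitionFn_update_add_sub hij hy hB,
    show (partitionFn κ W B y ω + 2 * T * (cosh (t * κ * W ω) - 1)) / partitionFn κ W B y ω
      = 1 + 2 * (T / partitionFn κ W B y ω) * (cosh (t * κ * W ω) - 1) by field_simp]
  convert mul_sq_le_log_one_add_two_mul_cosh_sub_one (div_nonneg (exp_pos _).le hZ.le)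
    ((div_le_one hZ).2 (exp_le_partitionFn i ω)) hr using 2
  simp only [tiltedWeight, exp_add]
  field_simp

theorem log_partitionFn_le_log_partitionFn_update_add_sub (hij : i ≠ j) (hy : y i = y j)
    (hB : B i = B j) (t : ℝ) (ω : Ω) :
    log (partitionFn κ W B y ω)
      ≤ log (partitionFn κ W B
          (Function.update (Function.update y i (y i + t)) j (y j - t)) ω) := by
  have : Nonempty ι := ⟨i⟩
  refine log_le_log (partitionFn_pos ω) ?_
  rw [partitionFn_update_add_sub hij hy hB]
  nlinarith [one_le_cosh (t * κ * W ω), exp_pos (y i * κ * W ω + B i)]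

end Pointwise

variable [MeasurableSpace Ω] {μ : Measure Ω}

theorem measurable_partitionFn (hW : Measurable W) : Measurable (partitionFn κ W B y) :=
  Finset.measurable_sum _ fun _ _ =>
    measurable_exp.comp ((measurable_const.mul hW).add_const _)

theorem measurable_tiltedWeight (hW : Measurable W) : Measurable (tiltedWeight κ W B y x) :=
  (hW.mul (measurable_exp.comp (measurable_const.mul hW))).div (measurable_partitionFn hW)

theorem integrable_log_partitionFn [IsFiniteMeasure μ] [Nonempty ι] (hWm : Measurable W)
    (hWi : Integrable W μ) : Integrable (fun ω => log (partitionFn κ W B y ω)) μ := by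
  refine Integrable.mono' ?_ (measurable_partitionFn hWm).log.aestronglyMeasurable
    (ae_of_all _ fun ω => (abs_log_partitionFn_le ω))
  refine (integrable_finsetSum _ fun k _ => ?_).add (integrable_const _)
  exact ((hWi.const_mul (y k * κ)).add (integrable_const (B k))).abs

theorem pressureFn_sub_pressureFn [IsFiniteMeasure μ] [Nonempty ι] (hWm : Measurable W)
    (hWi : Integrable W μ) (z : ι → ℝ) :
    pressureFn μ κ W B z - pressureFn μ κ W B y
      = ∫ ω, (log (partitionFn κ W B z ω) - log (partitionFn κ W B y ω)) ∂μ
        - κ / 2 * (∑ k, z k ^ 2 - ∑ k, y k ^ 2) := by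
  rw [integral_sub (integrable_log_partitionFn hWm hWi) (integrable_log_partitionFn hWm hWi)]
  unfold pressureFn
  ring

theorem integrable_tiltedWeight (hκ : 0 ≤ κ) (hWm : Measurable W) (hWnn : 0 ≤ W)
    (hWi : Integrable W μ) {m : ι} (hx : x ≤ y m) : Integrable (tiltedWeight κ W B y x) μ := by
  have : Nonempty ι := ⟨m⟩
  refine Integrable.mono' (hWi.const_mul (exp (-B m)))
    (measurable_tiltedWeight hWm).aestronglyMeasurable (ae_of_all _ fun ω => ?_)
  rw [Real.norm_of_nonneg (tiltedWeight_nonneg (hWnn ω))]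
  exact tiltedWeight_le hκ (hWnn ω) hx

theorem integrableOn_mul_tiltedWeight (hκ : 0 ≤ κ) (hWm : Measurable W) (hWnn : 0 ≤ W)
    (hWi : Integrable W μ) {m : ι} (hx : x ≤ y m) (M : ℝ) :
    IntegrableOn (fun ω => W ω * tiltedWeight κ W B y x ω) (W ⁻¹' Iic M) μ := by
  have : Nonempty ι := ⟨m⟩
  refine Integrable.mono' (hWi.const_mul (M * exp (-B m))).integrableOn
    (hWm.mul (measurable_tiltedWeight hWm)).aestronglyMeasurable
    (ae_restrict_of_forall_mem (hWm measurableSet_Iic) fun ω (hω : W ω ≤ M) => ?_)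
  rw [Real.norm_of_nonneg (mul_nonneg (hWnn ω) (tiltedWeight_nonneg (hWnn ω)))]
  calc W ω * tiltedWeight κ W B y x ω ≤ M * (exp (-B m) * W ω) :=
        mul_le_mul hω (tiltedWeight_le hκ (hWnn ω) hx) (tiltedWeight_nonneg (hWnn ω))
          ((hWnn ω).trans hω)
    _ = M * exp (-B m) * W ω := by ring

theorem integral_tiltedWeight_pos (hκ : 0 ≤ κ) (hWm : Measurable W) (hWnn : 0 ≤ W)
    (hWi : Integrable W μ) (hsupp : 0 < μ (Function.support W)) {m : ι} (hx : x ≤ y m) :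
    0 < ∫ ω, tiltedWeight κ W B y x ω ∂μ := by
  have : Nonempty ι := ⟨m⟩
  exact integral_pos_of_pos_of_ne_zero hsupp (integrable_tiltedWeight hκ hWm hWnn hWi hx)
    (fun ω => tiltedWeight_nonneg (hWnn ω)) fun ω hω => tiltedWeight_pos ((hWnn ω).lt_of_ne' hω)

theorem integral_tiltedWeight_eq_mul_gFun (x : ℝ) (hx : x ≠ 0) :
    ∫ ω, tiltedWeight κ W B y x ω ∂μ = x * gFun μ κ W B y x := by
  rw [gFun, integral_div, mul_div_cancel₀ _ hx]

theorem exp_mul_integral_tiltedWeight_eq [IsFiniteMeasure μ] (hκ : 0 < κ) (hWm : Measurable W)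
    (hWnn : 0 ≤ W) (hWi : Integrable W μ)
    (hmax : ∀ z, pressureFn μ κ W B z ≤ pressureFn μ κ W B y) (k : ι) :
    exp (B k) * ∫ ω, tiltedWeight κ W B y (y k) ω ∂μ = y k := by
  classical
  have : Nonempty ι := ⟨k⟩
  refine eq_of_forall_mul_le_mul_add_sq_div_two fun t => ?_
  have hdiff := pressureFn_sub_pressureFn (μ := μ) (κ := κ) (B := B) (y := y) hWm hWi
    (Function.update y k (y k + t))
  rw [Fintype.sum_update_sub_sum (fun _ x => x ^ 2)] at hdiff
  have hlog := integral_mono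
    ((integrable_tiltedWeight hκ.le hWm hWnn hWi le_rfl).const_mul (t * κ * exp (B k)))
    ((integrable_log_partitionFn hWm hWi).sub (integrable_log_partitionFn hWm hWi))
    (mul_tiltedWeight_le_log_partitionFn_update (y := y) k t)
  rw [integral_const_mul] at hlog
  simp only [Pi.sub_apply] at hlog
  have hκt : κ * (t * (exp (B k) * ∫ ω, tiltedWeight κ W B y (y k) ω ∂μ))
      ≤ κ * (y k * t + t ^ 2 / 2) := by
    linarith [hmax (Function.update y k (y k + t))]
  exact le_of_mul_le_mul_left hκt hκ

theorem gFun_eq_exp_neg [IsFiniteMeasure μ] (hκ : 0 < κ) (hWm : Measurable W) (hWnn : 0 ≤ W)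
    (hWi : Integrable W μ) (hsupp : 0 < μ (Function.support W))
    (hmax : ∀ z, pressureFn μ κ W B z ≤ pressureFn μ κ W B y) (k : ι) :
    gFun μ κ W B y (y k) = exp (-B k) := by
  have hstat := exp_mul_integral_tiltedWeight_eq hκ hWm hWnn hWi hmax k
  have hpos : 0 < y k :=
    hstat ▸ mul_pos (exp_pos _) (integral_tiltedWeight_pos hκ.le hWm hWnn hWi hsupp le_rfl)
  rw [integral_tiltedWeight_eq_mul_gFun _ hpos.ne'] at hstat
  have h : exp (B k) * gFun μ κ W B y (y k) = 1 :=
    mul_left_cancel₀ hpos.ne' (by linear_combination hstat)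
  rw [exp_neg]
  exact eq_inv_of_mul_eq_one_right h

theorem strictConvexOn_gFun (hκ : 0 ≤ κ) (hWm : Measurable W) (hWnn : 0 ≤ W)
    (hWi : Integrable W μ) (hsupp : 0 < μ (Function.support W)) (m : ι) :
    StrictConvexOn ℝ (Ioc 0 (y m)) (gFun μ κ W B y) := by
  have : Nonempty ι := ⟨m⟩
  have hform : gFun μ κ W B y = fun x => ∫ ω, W ω / partitionFn κ W B y ω *
      (exp (κ * W ω * x) / x) ∂μ := by
    ext x
    refine integral_congr_ae (ae_of_all _ fun ω => ?_)
    simp only [tiltedWeight]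
    ring_nf
  rw [hform]
  refine strictConvexOn_integral_mul (fun ω => div_nonneg (hWnn ω) (partitionFn_pos ω).le)
    (fun ω => (strictConvexOn_exp_mul_div _).subset Ioc_subset_Ioi_self (convex_Ioc _ _))
    (hsupp.trans_le (measure_mono fun ω hω => div_ne_zero hω (partitionFn_pos ω).ne'))
    fun x hx => ?_
  refine ((integrable_tiltedWeight (B := B) hκ hWm hWnn hWi hx.2).div_const x).congr
    (ae_of_all _ fun ω => ?_)
  simp only [tiltedWeight]
  ring_nf

theorem exists_lt_mul_setIntegral_of_gFun_lt (hκ : 0 ≤ κ) (hWm : Measurable W) (hWnn : 0 ≤ W)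
    (hWi : Integrable W μ) {u v : ℝ} {m : ι} (hu : 0 < u) (huv : u < v) (hv : v ≤ y m)
    (hg : gFun μ κ W B y u < gFun μ κ W B y v) :
    ∃ M : ℕ, gFun μ κ W B y v
      < κ * ∫ ω in W ⁻¹' Iic (M : ℝ), W ω * tiltedWeight κ W B y v ω ∂μ := by
  have : Nonempty ι := ⟨m⟩
  have hiv := integrable_tiltedWeight (μ := μ) (B := B) hκ hWm hWnn hWi hv
  have hiu := integrable_tiltedWeight (μ := μ) (B := B) hκ hWm hWnn hWi (huv.le.trans hv)
  have hgap : (v - u) * gFun μ κ W B y v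
      < ∫ ω, (tiltedWeight κ W B y v ω - tiltedWeight κ W B y u ω) ∂μ := by
    rw [integral_sub hiv hiu, integral_tiltedWeight_eq_mul_gFun v (hu.trans huv).ne',
      integral_tiltedWeight_eq_mul_gFun u hu.ne']
    nlinarith
  obtain ⟨M, hM⟩ := exists_lt_setIntegral_preimage_Iic hWm (hiv.sub hiu) hgap
  refine ⟨M, lt_of_mul_lt_mul_left ?_ (sub_pos.2 huv).le⟩
  calc (v - u) * gFun μ κ W B y v
      < ∫ ω in W ⁻¹' Iic (M : ℝ), (tiltedWeight κ W B y v ω - tiltedWeight κ W B y u ω) ∂μ := hM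
    _ ≤ ∫ ω in W ⁻¹' Iic (M : ℝ), (v - u) * (κ * (W ω * tiltedWeight κ W B y v ω)) ∂μ :=
      setIntegral_mono_on (hiv.sub hiu).integrableOn
        ((integrableOn_mul_tiltedWeight hκ hWm hWnn hWi hv M).const_mul _ |>.const_mul _)
        (hWm measurableSet_Iic) fun ω _ => tiltedWeight_sub_tiltedWeight_le hWnn u v ω
    _ = (v - u) * (κ * ∫ ω in W ⁻¹' Iic (M : ℝ), W ω * tiltedWeight κ W B y v ω ∂μ) := by
      rw [integral_const_mul, integral_const_mul]

variable [DecidableEq ι] {i j : ι}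

theorem pressureFn_lt_pressureFn_swap [IsFiniteMeasure μ] (hκ : 0 < κ) (hWm : Measurable W)
    (hWnn : 0 ≤ W) (hWi : Integrable W μ) (hsupp : 0 < μ (Function.support W)) (hij : i ≠ j)
    (hy : y i < y j) (hB : B j < B i) :
    pressureFn μ κ W B y
      < pressureFn μ κ W B (Function.update (Function.update y i (y j)) j (y i)) := by
  have : Nonempty ι := ⟨i⟩
  set z := Function.update (Function.update y i (y j)) j (y i)
  have hexp : ∀ ω, exp (y i * κ * W ω) ≤ exp (y j * κ * W ω) := fun ω => by
    gcongr
    exact hWnn ω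
  have hle : ∀ ω, partitionFn κ W B y ω ≤ partitionFn κ W B z ω := fun ω => by
    rw [partitionFn_swap hij]
    nlinarith [hexp ω, exp_lt_exp.2 hB]
  have hlt : ∀ ω, W ω ≠ 0 → partitionFn κ W B y ω < partitionFn κ W B z ω := fun ω hω => by
    rw [partitionFn_swap hij]
    have : exp (y i * κ * W ω) < exp (y j * κ * W ω) := by
      gcongr
      exact (hWnn ω).lt_of_ne' hω
    nlinarith [exp_lt_exp.2 hB]
  have hgain := integral_pos_of_pos_of_ne_zero hsupp
    ((integrable_log_partitionFn (κ := κ) (B := B) (y := z) hWm hWi).sub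
      (integrable_log_partitionFn hWm hWi))
    (fun ω => sub_nonneg.2 (log_le_log (partitionFn_pos ω) (hle ω)))
    fun ω hω => sub_pos.2 (log_lt_log (partitionFn_pos ω) (hlt ω hω))
  rw [← sub_pos, pressureFn_sub_pressureFn hWm hWi,
    Fintype.sum_update_update_sub_sum (fun _ x => x ^ 2) y hij]
  simpa using hgain

theorem mul_setIntegral_le_integral_log_partitionFn_update_add_sub [IsFiniteMeasure μ]
    (hκ : 0 ≤ κ) (hWm : Measurable W) (hWnn : 0 ≤ W) (hWi : Integrable W μ) (hij : i ≠ j)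
    (hy : y i = y j) (hB : B i = B j) {t : ℝ} (ht : 0 ≤ t) (M : ℝ) :
    (1 - 2 * (cosh (t * κ * M) - 1)) * (t ^ 2 * κ ^ 2 * exp (B i))
        * ∫ ω in W ⁻¹' Iic M, W ω * tiltedWeight κ W B y (y i) ω ∂μ
      ≤ ∫ ω, (log (partitionFn κ W B (Function.update (Function.update y i (y i + t)) j
          (y j - t)) ω) - log (partitionFn κ W B y ω)) ∂μ := by
  have : Nonempty ι := ⟨i⟩
  have hlog := (integrable_log_partitionFn (μ := μ) (κ := κ) (B := B)
    (y := Function.update (Function.update y i (y i + t)) j (y j - t)) hWm hWi).sub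
    (integrable_log_partitionFn (κ := κ) (B := B) (y := y) hWm hWi)
  rw [← integral_const_mul]
  refine (setIntegral_mono_on ((integrableOn_mul_tiltedWeight hκ hWm hWnn hWi le_rfl M).const_mul _)
    hlog.integrableOn (hWm measurableSet_Iic) fun ω (hω : W ω ≤ M) => ?_).trans
    (setIntegral_le_integral hlog (ae_of_all _ fun ω =>
      sub_nonneg.2 (log_partitionFn_le_log_partitionFn_update_add_sub hij hy hB t ω)))
  rw [mul_assoc]
  refine mul_tiltedWeight_le_log_partitionFn_update_add_sub hij hy hB ?_
  rw [abs_of_nonneg (mul_nonneg (mul_nonneg ht hκ) (hWnn ω))]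
  gcongr

theorem exists_pressureFn_lt_of_eq [IsFiniteMeasure μ] (hκ : 0 < κ) (hWm : Measurable W)
    (hWnn : 0 ≤ W) (hWi : Integrable W μ) (hij : i ≠ j) (hy : y i = y j) (hB : B i = B j)
    {M : ℕ} (hM : exp (-B i)
      < κ * ∫ ω in W ⁻¹' Iic (M : ℝ), W ω * tiltedWeight κ W B y (y i) ω ∂μ) :
    ∃ z, pressureFn μ κ W B y < pressureFn μ κ W B z := by
  have : Nonempty ι := ⟨i⟩
  set K := ∫ ω in W ⁻¹' Iic (M : ℝ), W ω * tiltedWeight κ W B y (y i) ω ∂μ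
  have hκK : 0 < κ * K := (exp_pos _).trans hM
  have hcosh : Tendsto (fun t => 2 * (cosh (t * κ * M) - 1)) (𝓝[>] 0) (𝓝 0) :=
    ((by fun_prop : Continuous fun t => 2 * (cosh (t * κ * M) - 1)).tendsto' 0 0
      (by simp)).mono_left nhdsWithin_le_nhds
  obtain ⟨t, hη, ht⟩ := ((hcosh.eventually (gt_mem_nhds (sub_pos.2 ((div_lt_one hκK).2 hM)))).and
    self_mem_nhdsWithin).exists
  set η := 2 * (cosh (t * κ * M) - 1)
  have hη' : exp (-B i) < (1 - η) * (κ * K) := by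
    rwa [lt_sub_comm, div_lt_iff₀ hκK] at hη
  have he : exp (B i) * exp (-B i) = 1 := by rw [← exp_add, add_neg_cancel, exp_zero]
  have hloss : t ^ 2 * κ < (1 - η) * (t ^ 2 * κ ^ 2 * exp (B i)) * K :=
    calc t ^ 2 * κ = t ^ 2 * κ * exp (B i) * exp (-B i) := by rw [mul_assoc, he, mul_one]
      _ < t ^ 2 * κ * exp (B i) * ((1 - η) * (κ * K)) :=
        mul_lt_mul_of_pos_left hη' (by positivity)
      _ = (1 - η) * (t ^ 2 * κ ^ 2 * exp (B i)) * K := by ring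
  let z := Function.update (Function.update y i (y i + t)) j (y j - t)
  have hgain : (1 - η) * (t ^ 2 * κ ^ 2 * exp (B i)) * K
      ≤ ∫ ω, (log (partitionFn κ W B z ω) - log (partitionFn κ W B y ω)) ∂μ :=
    mul_setIntegral_le_integral_log_partitionFn_update_add_sub hκ.le hWm hWnn hWi hij hy hB
      ht.le M
  refine ⟨z, ?_⟩
  rw [← sub_pos, pressureFn_sub_pressureFn hWm hWi,
    Fintype.sum_update_update_sub_sum (fun _ x => x ^ 2) y hij, ← hy]
  nlinarith

theorem card_filter_lt_le_one [IsFiniteMeasure μ] (hκ : 0 < κ) (hWm : Measurable W)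
    (hWnn : 0 ≤ W) (hWi : Integrable W μ) (hsupp : 0 < μ (Function.support W))
    (hmax : ∀ z, pressureFn μ κ W B z ≤ pressureFn μ κ W B y) {xs : ℝ}
    (hxs : xs ∈ Ioc 0 (⨆ i, y i)) (hmin : IsMinOn (gFun μ κ W B y) (Ioc 0 (⨆ i, y i)) xs) :
    (Finset.univ.filter fun i => xs < y i).card ≤ 1 := by
  classical
  refine Finset.card_le_one.2 fun i hi j hj => by_contra fun hij => ?_
  simp only [Finset.mem_filter, Finset.mem_univ, true_and] at hi hj
  have : Nonempty ι := ⟨i⟩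
  obtain ⟨m, hm⟩ := exists_eq_ciSup_of_finite (f := y)
  rw [← hm] at hxs hmin
  have hle_max : ∀ k, y k ≤ y m := fun k => hm ▸ le_ciSup (Finite.bddAbove_range y) k
  have hconv := strictConvexOn_gFun (μ := μ) (B := B) (y := y) hκ.le hWm hWnn hWi hsupp m
  have hg := gFun_eq_exp_neg hκ hWm hWnn hWi hsupp hmax
  wlog hle : y i ≤ y j generalizing i j
  · exact this j i (Ne.symm hij) hj hi (le_of_not_ge hle)
  rcases hle.lt_or_eq with hlt | heq
  · have hgij := hconv.lt_of_isMinOn hmin hxs ⟨hxs.1.trans (hi.trans hlt), hle_max j⟩ hi hlt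
    rw [hg, hg, exp_lt_exp, neg_lt_neg_iff] at hgij
    exact (hmax _).not_gt (pressureFn_lt_pressureFn_swap hκ hWm hWnn hWi hsupp hij hlt hgij)
  · have hB : B i = B j := neg_injective (exp_injective (by rw [← hg i, ← hg j, heq]))
    have hu : xs < (xs + y i) / 2 := by linarith
    have hgu := hconv.lt_of_isMinOn hmin hxs ⟨hxs.1.trans hi, hle_max i⟩ hu (by linarith)
    obtain ⟨M, hM⟩ := exists_lt_mul_setIntegral_of_gFun_lt hκ.le hWm hWnn hWi
      (hxs.1.trans hu) (by linarith) (hle_max i) hgu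
    rw [hg] at hM
    obtain ⟨z, hz⟩ := exists_pressureFn_lt_of_eq hκ hWm hWnn hWi hij heq hB hM
    exact (hmax z).not_gt hz

end AnnealedPotts

open AnnealedPotts

theorem pottsG_eq_pressureFn {Ω : Type*} [MeasurableSpace Ω] (μ : Measure Ω) (W : Ω → ℝ)
    (q : ℕ) (β : ℝ) (B : Fin q → ℝ) :
    pottsG μ W q β B = pressureFn μ ((exp β - 1) / ∫ ω, W ω ∂μ) W B := by
  ext y
  simp only [pottsG, pressureFn, partitionFn]
  congr 1
  · congr 1
    ext ω
    congr 2
    ext k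
    ring_nf
  · ring

theorem pottsg_eq_gFun {Ω : Type*} [MeasurableSpace Ω] (μ : Measure Ω) (W : Ω → ℝ)
    (q : ℕ) (β : ℝ) (B y : Fin q → ℝ) :
    pottsg μ W q β B y = gFun μ ((exp β - 1) / ∫ ω, W ω ∂μ) W B y := by
  ext x
  simp only [pottsg, gFun, tiltedWeight, partitionFn, integral_div, one_div_mul_eq_div]
  congr 2
  ext ω
  ring_nf

theorem small_field_solution_structure_general
    {Ω : Type*} [MeasurableSpace Ω] (μ : Measure Ω) [IsProbabilityMeasure μ]
    (W : Ω → ℝ) (hWmeas : Measurable W) (hWnn : ∀ ω, 0 ≤ W ω)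
    (hWint : Integrable W μ) (hEW : 0 < ∫ ω, W ω ∂μ)
    (q : ℕ) (β : ℝ) (hβ : 0 < β) :
    ∃ ε > (0 : ℝ), ∀ B : Fin q → ℝ, (∀ i, 0 ≤ B i) → (∀ i, B i < ε) →
      ∀ y : Fin q → ℝ,
        (∀ z : Fin q → ℝ, pottsG μ W q β B z ≤ pottsG μ W q β B y) →
        ∀ xs ∈ Ioc (0 : ℝ) (⨆ i, y i),
          (∀ x ∈ Ioc (0 : ℝ) (⨆ i, y i), pottsg μ W q β B y xs ≤ pottsg μ W q β B y x) →
          (Finset.univ.filter (fun i : Fin q => xs < y i)).card ≤ 1 := by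
  refine ⟨1, one_pos, fun B _ _ y hmax xs hxs hmin => ?_⟩
  have hκ : 0 < (exp β - 1) / ∫ ω, W ω ∂μ := div_pos (sub_pos.2 (one_lt_exp_iff.2 hβ)) hEW
  rw [pottsG_eq_pressureFn] at hmax
  rw [pottsg_eq_gFun] at hmin
  exact card_filter_lt_le_one hκ hWmeas hWnn hWint
    ((integral_pos_iff_support_of_nonneg hWnn hWint).1 hEW) hmax hxs (isMinOn_iff.2 hmin)

/-- **Solution structure for small magnetic fields**: for a small enough nonnegative field,
every maximizer of `G` has at most one coordinate exceeding the minimizer `x_*(y,B)`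
of `g_{y,B}` on `(0, y_max]`. -/
theorem small_field_solution_structure
    {Ω : Type*} [MeasurableSpace Ω] (μ : Measure Ω) [IsProbabilityMeasure μ]
    (W : Ω → ℝ) (hWmeas : Measurable W) (hWnn : ∀ ω, 0 ≤ W ω)
    (hWint : Integrable W μ) (hEW : 0 < ∫ ω, W ω ∂μ)
    (q : ℕ) (hq : 2 ≤ q) (β : ℝ) (hβ : 0 < β) :
    ∃ ε > (0 : ℝ), ∀ B : Fin q → ℝ, (∀ i, 0 ≤ B i) → (∀ i, B i < ε) →
      ∀ y : Fin q → ℝ,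
        (∀ z : Fin q → ℝ, pottsG μ W q β B z ≤ pottsG μ W q β B y) →
        ∀ xs ∈ Ioc (0 : ℝ) (⨆ i, y i),
          (∀ x ∈ Ioc (0 : ℝ) (⨆ i, y i), pottsg μ W q β B y xs ≤ pottsg μ W q β B y x) →
          (Finset.univ.filter (fun i : Fin q => xs < y i)).card ≤ 1 :=
  small_field_solution_structure_general μ W hWmeas hWnn hWint hEW q β hβ
end

section
/- Fix an integer q≥3 and B≥0 with e^{−B}(q−1)>1. Let W be a Pareto random variable with parameter τ≥4, i.e., with density f_W(w)=(τ−1)·w^{−τ} for w≥1 and 0 otherwise. Define 𝓕_B(t)=E[(W/E[W])·(e^{tW+B}−1)/(e^{tW+B}+q−1)] for t≥0. Then t↦𝓕_B''(t) is first positive and then negative on (0,∞): there exists t_*>0 such that 𝓕_B''(t)>0 for 0<t<t_* and 𝓕_B''(t)<0 for t>t_*. -/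
/-!
With `c = q` and `φ(x) = (eˣ - 1) / (eˣ + c - 1)`, the Pareto law gives
`𝓕_B(t) = (τ - 2) ∫₁^∞ x^(1-τ) φ(tx + B) dx`. Differentiating twice under the integral and
substituting `u = tx` yields `𝓕_B''(t) = (τ - 2) t^(τ-4) H(t)` with
`H(t) = ∫_t^∞ u^(3-τ) φ''(u + B) du`. As `φ''(x)` has the sign of `c - 1 - eˣ`, `H` strictly
decreases on `(0, A]`, `A = log (c - 1) - B > 0`, and is negative on `[A, ∞)`; and since `τ ≥ 4`
the integrand dominates a multiple of `1/u` near `0`, so `H(0+) = +∞`. Hence `H`, and with it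
`𝓕_B''`, changes sign exactly once.
-/

open MeasureTheory Filter Topology Set

/-- The function `𝓕_B(t) = E[(W/E[W])·(e^{tW+B}−1)/(e^{tW+B}+q−1)]`. -/
noncomputable def Ffun {Ω : Type*} [MeasurableSpace Ω] (μ : Measure Ω)
    (W : Ω → ℝ) (q : ℕ) (B : ℝ) (t : ℝ) : ℝ :=
  ∫ ω, (W ω / (∫ ω', W ω' ∂μ)) * (Real.exp (t * W ω + B) - 1) /
    (Real.exp (t * W ω + B) + q - 1) ∂μ

open Real

noncomputable def pottsRatio (c x : ℝ) : ℝ := (exp x - 1) / (exp x + c - 1)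

noncomputable def pottsRatioDeriv (c x : ℝ) : ℝ := c * exp x / (exp x + c - 1) ^ 2

noncomputable def pottsRatioDeriv2 (c x : ℝ) : ℝ :=
  c * exp x * (c - 1 - exp x) / (exp x + c - 1) ^ 3

section PottsRatio

variable {c : ℝ}

lemma exp_add_sub_one_pos (hc : 1 ≤ c) (x : ℝ) : 0 < exp x + c - 1 := by
  linarith [exp_pos x]

lemma hasDerivAt_pottsRatio (hc : 1 ≤ c) (x : ℝ) :
    HasDerivAt (pottsRatio c) (pottsRatioDeriv c x) x := by
  have hd := exp_add_sub_one_pos hc x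
  refine (((hasDerivAt_exp x).sub_const 1).div
    (((hasDerivAt_exp x).add_const c).sub_const 1) hd.ne').congr_deriv ?_
  unfold pottsRatioDeriv
  field_simp
  ring

lemma hasDerivAt_pottsRatioDeriv (hc : 1 ≤ c) (x : ℝ) :
    HasDerivAt (pottsRatioDeriv c) (pottsRatioDeriv2 c x) x := by
  have hd := exp_add_sub_one_pos hc x
  refine (((hasDerivAt_exp x).const_mul c).div
    ((((hasDerivAt_exp x).add_const c).sub_const 1).fun_pow 2) (pow_pos hd 2).ne').congr_deriv ?_
  unfold pottsRatioDeriv2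
  field_simp
  ring

lemma continuous_pottsRatio (hc : 1 ≤ c) : Continuous (pottsRatio c) :=
  continuous_iff_continuousAt.2 fun x => (hasDerivAt_pottsRatio hc x).continuousAt

lemma continuous_pottsRatioDeriv (hc : 1 ≤ c) : Continuous (pottsRatioDeriv c) :=
  continuous_iff_continuousAt.2 fun x => (hasDerivAt_pottsRatioDeriv hc x).continuousAt

lemma continuous_pottsRatioDeriv2 (hc : 1 ≤ c) : Continuous (pottsRatioDeriv2 c) :=
  (by fun_prop : Continuous fun x => c * exp x * (c - 1 - exp x)).div (by fun_prop)
    fun x => (pow_pos (exp_add_sub_one_pos hc x) 3).ne'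

lemma abs_pottsRatio_le_one (hc : 2 ≤ c) (x : ℝ) : |pottsRatio c x| ≤ 1 := by
  have hd := exp_add_sub_one_pos (by linarith) x
  rw [pottsRatio, abs_div, abs_of_pos hd, div_le_one hd, abs_le]
  constructor <;> linarith [exp_pos x]

lemma abs_pottsRatioDeriv_le (hc : 2 ≤ c) (x : ℝ) : |pottsRatioDeriv c x| ≤ c := by
  have hd := exp_add_sub_one_pos (by linarith) x
  have he := exp_pos x
  rw [pottsRatioDeriv, abs_of_nonneg (by positivity), div_le_iff₀ (by positivity)]
  nlinarith [sq_nonneg (exp x + c - 2)]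

lemma abs_pottsRatioDeriv2_le (hc : 1 ≤ c) (x : ℝ) : |pottsRatioDeriv2 c x| ≤ c * exp (-x) := by
  have hd := exp_add_sub_one_pos hc x
  have he := exp_pos x
  have hnum : |c - 1 - exp x| ≤ exp x + c - 1 := abs_le.2 ⟨by linarith, by linarith⟩
  calc |pottsRatioDeriv2 c x|
      = c * exp x * |c - 1 - exp x| / (exp x + c - 1) ^ 3 := by
        rw [pottsRatioDeriv2, abs_div, abs_mul, abs_of_pos (by positivity : 0 < c * exp x),
          abs_of_pos (by positivity : (0 : ℝ) < (exp x + c - 1) ^ 3)]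
    _ ≤ c * exp x * (exp x + c - 1) / (exp x + c - 1) ^ 3 := by gcongr
    _ = c * exp x / (exp x + c - 1) ^ 2 := by field_simp
    _ ≤ c * exp x / exp x ^ 2 := by gcongr; linarith
    _ = c * exp (-x) := by rw [exp_neg]; field_simp

lemma pottsRatioDeriv2_pos (hc : 1 ≤ c) {x : ℝ} (hx : exp x < c - 1) :
    0 < pottsRatioDeriv2 c x := by
  have hd := exp_add_sub_one_pos hc x
  have : 0 < c - 1 - exp x := by linarith
  unfold pottsRatioDeriv2
  positivity

lemma pottsRatioDeriv2_neg (hc : 1 ≤ c) {x : ℝ} (hx : c - 1 < exp x) :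
    pottsRatioDeriv2 c x < 0 := by
  have hd := exp_add_sub_one_pos hc x
  exact div_neg_of_neg_of_pos
    (mul_neg_of_pos_of_neg (by positivity) (by linarith)) (by positivity)

end PottsRatio

noncomputable def paretoMeasure (τ : ℝ) : Measure ℝ :=
  volume.withDensity fun x => ENNReal.ofReal ((Ici 1).indicator (fun v => (τ - 1) * v ^ (-τ)) x)

lemma integral_paretoMeasure {τ : ℝ} (hτ : 1 ≤ τ) (f : ℝ → ℝ) :
    ∫ x, f x ∂paretoMeasure τ = ∫ x in Ioi 1, (τ - 1) * x ^ (-τ) * f x := by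
  have hmeas : Measurable fun x => (Ici (1 : ℝ)).indicator (fun v => (τ - 1) * v ^ (-τ)) x :=
    (by fun_prop : Measurable fun v : ℝ => (τ - 1) * v ^ (-τ)).indicator measurableSet_Ici
  rw [paretoMeasure, integral_withDensity_eq_integral_toReal_smul hmeas.ennreal_ofReal
    (ae_of_all _ fun _ => ENNReal.ofReal_lt_top), ← integral_Ici_eq_integral_Ioi,
    ← integral_indicator measurableSet_Ici]
  congr with x
  by_cases hx : x ∈ Ici (1 : ℝ)
  · have hdens : 0 ≤ (τ - 1) * x ^ (-τ) :=
      mul_nonneg (by linarith) (rpow_nonneg (zero_le_one.trans hx) _)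
    simp [hx, ENNReal.toReal_ofReal hdens]
  · simp [hx]

lemma integral_id_paretoMeasure {τ : ℝ} (hτ : 2 < τ) :
    ∫ x, x ∂paretoMeasure τ = (τ - 1) / (τ - 2) := by
  have hx : ∀ x ∈ Ioi (1 : ℝ), (τ - 1) * x ^ (-τ) * x = (τ - 1) * x ^ (-τ + 1) := fun x hx => by
    rw [rpow_add_one (zero_lt_one.trans hx).ne', mul_assoc]
  rw [integral_paretoMeasure (by linarith), setIntegral_congr_fun measurableSet_Ioi hx,
    integral_const_mul, integral_Ioi_rpow_of_lt (by linarith) zero_lt_one, one_rpow]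
  have : -τ + 1 + 1 = -(τ - 2) := by ring
  rw [this, div_neg]
  ring

noncomputable def weightedIntegral (a B : ℝ) (f : ℝ → ℝ) (t : ℝ) : ℝ :=
  ∫ x in Ioi 1, x ^ a * f (t * x + B)

lemma hasDerivAt_weightedIntegral {a B t₀ ε : ℝ} {f f' bound : ℝ → ℝ}
    (hf : ∀ y, HasDerivAt f (f' y) y) (hf' : Continuous f') (hε : 0 < ε)
    (hint : IntegrableOn (fun x => x ^ a * f (t₀ * x + B)) (Ioi 1))
    (hbound_int : IntegrableOn bound (Ioi 1))
    (hbound : ∀ x ∈ Ioi (1 : ℝ), ∀ t ∈ Metric.ball t₀ ε,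
      |x ^ (a + 1) * f' (t * x + B)| ≤ bound x) :
    HasDerivAt (weightedIntegral a B f) (weightedIntegral (a + 1) B f' t₀) t₀ := by
  have hfc : Continuous f := continuous_iff_continuousAt.2 fun y => (hf y).continuousAt
  refine (hasDerivAt_integral_of_dominated_loc_of_deriv_le (μ := volume.restrict (Ioi 1))
    (F := fun t x => x ^ a * f (t * x + B)) (F' := fun t x => x ^ (a + 1) * f' (t * x + B))
    (Metric.ball_mem_nhds t₀ hε) (Eventually.of_forall fun t => ?_) hint
    ?_ ?_ hbound_int ?_).2
  · exact ((by fun_prop : Measurable fun x : ℝ => x ^ a).mul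
      (hfc.measurable.comp (by fun_prop))).aestronglyMeasurable
  · exact ((by fun_prop : Measurable fun x : ℝ => x ^ (a + 1)).mul
      (hf'.measurable.comp (by fun_prop))).aestronglyMeasurable
  · exact (ae_restrict_mem measurableSet_Ioi).mono hbound
  · filter_upwards [ae_restrict_mem measurableSet_Ioi] with x hx t _
    have hinner : HasDerivAt (fun t => f (t * x + B)) (f' (t * x + B) * x) t :=
      (hf _).comp t (((hasDerivAt_id t).mul_const x).add_const B |>.congr_deriv (one_mul x))
    refine (hinner.const_mul (x ^ a)).congr_deriv ?_
    rw [rpow_add_one (zero_lt_one.trans hx).ne']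
    ring

lemma integrableOn_Ioi_one_rpow_mul_of_abs_le {a C : ℝ} {g : ℝ → ℝ} (ha : a < -1)
    (hg : Measurable g) (hC : ∀ x, |g x| ≤ C) :
    IntegrableOn (fun x => x ^ a * g x) (Ioi 1) :=
  (integrableOn_Ioi_rpow_of_lt ha zero_lt_one).mul_bdd hg.aestronglyMeasurable
    (ae_of_all _ fun x => (Real.norm_eq_abs _).trans_le (hC x))

lemma weightedIntegral_eq_rpow_mul_integral_Ioi (a B : ℝ) (f : ℝ → ℝ) {t : ℝ} (ht : 0 < t) :
    weightedIntegral a B f t = t ^ (-a - 1) * ∫ u in Ioi t, u ^ a * f (u + B) := by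
  have hscale : ∀ x ∈ Ioi (1 : ℝ),
      x ^ a * f (t * x + B) = t ^ (-a) * ((t * x) ^ a * f (t * x + B)) := fun x hx => by
    rw [mul_rpow ht.le (zero_lt_one.trans hx).le, ← mul_assoc, ← mul_assoc,
      ← rpow_add ht, neg_add_cancel, rpow_zero, one_mul]
  rw [weightedIntegral, setIntegral_congr_fun measurableSet_Ioi hscale, integral_const_mul,
    integral_comp_mul_left_Ioi (fun u => u ^ a * f (u + B)) 1 ht, mul_one, smul_eq_mul,
    ← mul_assoc, sub_eq_add_neg, rpow_add ht, rpow_neg_one]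

section SignChange

variable {k : ℝ → ℝ}

lemma integral_Ioi_lt_integral_Ioi_of_pos_on {s t : ℝ} (hint : IntegrableOn k (Ioi s))
    (hst : s < t) (hpos : ∀ u ∈ Ioo s t, 0 < k u) :
    ∫ u in Ioi t, k u < ∫ u in Ioi s, k u := by
  have hst' : IntervalIntegrable k volume s t :=
    (intervalIntegrable_iff_integrableOn_Ioc_of_le hst.le).2 (hint.mono_set Ioc_subset_Ioi_self)
  rw [← intervalIntegral.integral_interval_add_Ioi' hst' (hint.mono_set (Ioi_subset_Ioi hst.le))]
  linarith [intervalIntegral.intervalIntegral_pos_of_pos_on hst' hpos hst]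

lemma integral_Ioi_neg_of_neg_on {t : ℝ} (hint : IntegrableOn k (Ioi t))
    (hneg : ∀ u, t < u → k u < 0) : ∫ u in Ioi t, k u < 0 := by
  have hlt := integral_Ioi_lt_integral_Ioi_of_pos_on hint.neg (lt_add_one t)
    fun u hu => neg_pos.2 (hneg u hu.1)
  have hle : ∫ u in Ioi (t + 1), k u ≤ 0 :=
    setIntegral_nonpos measurableSet_Ioi fun u hu => (hneg u ((lt_add_one t).trans hu)).le
  simp only [Pi.neg_apply, integral_neg] at hlt
  linarith

lemma exists_integral_Ioi_pos_of_div_le {m b : ℝ} (hm : 0 < m) (hb : 0 < b)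
    (hint : ∀ t, 0 < t → IntegrableOn k (Ioi t)) (hk : ∀ u ∈ Ioc 0 b, m / u ≤ k u) :
    ∃ s ∈ Ioo 0 b, 0 < ∫ u in Ioi s, k u := by
  set L := (|∫ u in Ioi b, k u| + 1) / m
  have hL : 0 < L := by positivity
  set s := b / exp L
  have hs : 0 < s := by positivity
  have hsb : s < b := div_lt_self hb (one_lt_exp_iff.2 hL)
  refine ⟨s, ⟨hs, hsb⟩, ?_⟩
  have hsb' : IntervalIntegrable k volume s b :=
    (intervalIntegrable_iff_integrableOn_Ioc_of_le hsb.le).2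
      ((hint s hs).mono_set Ioc_subset_Ioi_self)
  have hlog : ∫ u in s..b, m / u = |∫ u in Ioi b, k u| + 1 := by
    simp_rw [div_eq_mul_inv m]
    rw [intervalIntegral.integral_const_mul, integral_inv_of_pos hs hb, div_div_cancel₀ hb.ne',
      log_exp, mul_div_cancel₀ _ hm.ne']
  have hmono : ∫ u in s..b, m / u ≤ ∫ u in s..b, k u :=
    intervalIntegral.integral_mono_on hsb.le
      ((continuousOn_const.div continuousOn_id fun u hu =>
        (hs.trans_le hu.1).ne').intervalIntegrable_of_Icc hsb.le)
      hsb' fun u hu => hk u ⟨hs.trans_le hu.1, hu.2⟩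
  rw [← intervalIntegral.integral_interval_add_Ioi' hsb' (hint b hb)]
  linarith [neg_abs_le (∫ u in Ioi b, k u)]

theorem exists_sign_change_integral_Ioi {A : ℝ} (hint : ∀ t, 0 < t → IntegrableOn k (Ioi t))
    (hpos : ∀ u ∈ Ioo 0 A, 0 < k u) (hneg : ∀ u, A < u → k u < 0)
    (hsmall : ∃ s ∈ Ioo 0 A, 0 < ∫ u in Ioi s, k u) :
    ∃ tstar, 0 < tstar ∧ (∀ t, 0 < t → t < tstar → 0 < ∫ u in Ioi t, k u) ∧
      ∀ t, tstar < t → ∫ u in Ioi t, k u < 0 := by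
  obtain ⟨s, hs, hs_pos⟩ := hsmall
  set S := {t | t ∈ Ioc 0 A ∧ 0 < ∫ u in Ioi t, k u}
  have hsS : s ∈ S := ⟨⟨hs.1, hs.2.le⟩, hs_pos⟩
  have hS : BddAbove S := ⟨A, fun t ht => ht.1.2⟩
  have hdecr : ∀ t t', 0 < t → t < t' → t' ≤ A → ∫ u in Ioi t', k u < ∫ u in Ioi t, k u :=
    fun t t' ht htt' ht'A => integral_Ioi_lt_integral_Ioi_of_pos_on (hint t ht) htt'
      fun u hu => hpos u ⟨ht.trans hu.1, hu.2.trans_le ht'A⟩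
  refine ⟨sSup S, hs.1.trans_le (le_csSup hS hsS), fun t ht htlt => ?_, fun t htlt => ?_⟩
  · obtain ⟨t', ⟨⟨_, ht'A⟩, ht'_pos⟩, htt'⟩ := exists_lt_of_lt_csSup ⟨s, hsS⟩ htlt
    linarith [hdecr t t' ht htt' ht'A]
  · have ht : 0 < t := (hs.1.trans_le (le_csSup hS hsS)).trans htlt
    rcases le_or_gt t A with htA | hAt
    · obtain ⟨t', hlt', ht't⟩ := exists_between htlt
      have ht' : 0 < t' := (hs.1.trans_le (le_csSup hS hsS)).trans hlt'
      have ht'_nonpos : ∫ u in Ioi t', k u ≤ 0 :=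
        not_lt.1 fun h => (le_csSup hS ⟨⟨ht', ht't.le.trans htA⟩, h⟩).not_gt hlt'
      linarith [hdecr t' t ht' ht't htA]
    · exact integral_Ioi_neg_of_neg_on (hint t ht) fun u hu => hneg u (hAt.trans hu)

end SignChange

section ParetoPotts

variable {c τ B : ℝ}

lemma hasDerivAt_weightedIntegral_pottsRatio (hc : 2 ≤ c) (hτ : 3 < τ) (t : ℝ) :
    HasDerivAt (weightedIntegral (1 - τ) B (pottsRatio c))
      (weightedIntegral (2 - τ) B (pottsRatioDeriv c) t) t := by
  rw [show 2 - τ = 1 - τ + 1 by ring]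
  refine hasDerivAt_weightedIntegral (hasDerivAt_pottsRatio (by linarith))
    (continuous_pottsRatioDeriv (by linarith)) zero_lt_one
    (integrableOn_Ioi_one_rpow_mul_of_abs_le (by linarith)
      ((continuous_pottsRatio (by linarith)).measurable.comp (by fun_prop))
      fun x => abs_pottsRatio_le_one hc _)
    ((integrableOn_Ioi_rpow_of_lt (by linarith : 1 - τ + 1 < -1) zero_lt_one).const_mul c)
    fun x hx t _ => ?_
  have hx0 : 0 < x := zero_lt_one.trans hx
  rw [abs_mul, abs_of_pos (rpow_pos_of_pos hx0 _), mul_comm c]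
  exact mul_le_mul_of_nonneg_left (abs_pottsRatioDeriv_le hc _) (rpow_nonneg hx0.le _)

lemma hasDerivAt_weightedIntegral_pottsRatioDeriv (hc : 2 ≤ c) (hτ : 3 < τ) {t : ℝ} (ht : 0 < t) :
    HasDerivAt (weightedIntegral (2 - τ) B (pottsRatioDeriv c))
      (weightedIntegral (3 - τ) B (pottsRatioDeriv2 c) t) t := by
  rw [show 3 - τ = 2 - τ + 1 by ring]
  refine hasDerivAt_weightedIntegral (hasDerivAt_pottsRatioDeriv (by linarith))
    (continuous_pottsRatioDeriv2 (by linarith)) (half_pos ht)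
    (integrableOn_Ioi_one_rpow_mul_of_abs_le (by linarith)
      ((continuous_pottsRatioDeriv (by linarith)).measurable.comp (by fun_prop))
      fun x => abs_pottsRatioDeriv_le hc _)
    ((exp_neg_integrableOn_Ioi 1 (half_pos ht)).const_mul (c * exp (-B)))
    fun x hx s hs => ?_
  have hx0 : 0 < x := zero_lt_one.trans hx
  have hs : t / 2 < s := by
    have := (abs_lt.1 (Metric.mem_ball.1 hs)).1
    linarith
  have hpow : x ^ (2 - τ + 1) ≤ 1 := rpow_le_one_of_one_le_of_nonpos hx.le (by linarith)
  have hexp : exp (-(s * x + B)) ≤ exp (-B) * exp (-(t / 2) * x) := by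
    rw [← exp_add, exp_le_exp]
    nlinarith
  calc |x ^ (2 - τ + 1) * pottsRatioDeriv2 c (s * x + B)|
      ≤ 1 * (c * exp (-(s * x + B))) := by
        rw [abs_mul, abs_of_pos (rpow_pos_of_pos hx0 _)]
        exact mul_le_mul hpow (abs_pottsRatioDeriv2_le (by linarith) _) (abs_nonneg _) zero_le_one
    _ ≤ c * exp (-B) * exp (-(t / 2) * x) := by
        rw [one_mul, mul_assoc]
        exact mul_le_mul_of_nonneg_left hexp (by linarith)

lemma integrableOn_Ioi_rpow_mul_pottsRatioDeriv2 (hc : 1 ≤ c) (hτ : 3 ≤ τ) {t : ℝ} (ht : 0 < t) :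
    IntegrableOn (fun u => u ^ (3 - τ) * pottsRatioDeriv2 c (u + B)) (Ioi t) := by
  refine Integrable.mono' ((exp_neg_integrableOn_Ioi t zero_lt_one).const_mul
      (t ^ (3 - τ) * (c * exp (-B))))
    (((by fun_prop : Measurable fun u : ℝ => u ^ (3 - τ)).mul
      ((continuous_pottsRatioDeriv2 hc).measurable.comp (by fun_prop))).aestronglyMeasurable) ?_
  filter_upwards [ae_restrict_mem measurableSet_Ioi] with u hu
  have hu0 : 0 < u := ht.trans hu
  calc ‖u ^ (3 - τ) * pottsRatioDeriv2 c (u + B)‖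
      ≤ t ^ (3 - τ) * (c * exp (-(u + B))) := by
        rw [Real.norm_eq_abs, abs_mul, abs_of_pos (rpow_pos_of_pos hu0 _)]
        exact mul_le_mul (rpow_le_rpow_of_nonpos ht hu.le (by linarith))
          (abs_pottsRatioDeriv2_le hc _) (abs_nonneg _) (rpow_nonneg ht.le _)
    _ = t ^ (3 - τ) * (c * exp (-B)) * exp (-1 * u) := by
        rw [neg_add, exp_add]; ring_nf

lemma exists_integral_Ioi_rpow_mul_pottsRatioDeriv2_pos (hBc : exp B < c - 1) (hτ : 4 ≤ τ) :
    ∃ s ∈ Ioo 0 (log (c - 1) - B),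
      0 < ∫ u in Ioi s, u ^ (3 - τ) * pottsRatioDeriv2 c (u + B) := by
  have hc : 1 ≤ c := by linarith [exp_pos B]
  have hA : 0 < log (c - 1) - B := sub_pos.2 ((lt_log_iff_exp_lt ((exp_pos B).trans hBc)).2 hBc)
  obtain ⟨b, hb, hbA, hb1⟩ : ∃ b, 0 < b ∧ b < log (c - 1) - B ∧ b ≤ 1 :=
    ⟨min (log (c - 1) - B) 1 / 2, by positivity,
      by linarith [min_le_left (log (c - 1) - B) 1], by linarith [min_le_right (log (c - 1) - B) 1]⟩
  obtain ⟨u₀, hu₀, hmin⟩ := isCompact_Icc.exists_isMinOn (nonempty_Icc.2 hb.le)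
    ((continuous_pottsRatioDeriv2 hc).comp (continuous_add_const B)).continuousOn
  have hm : 0 < pottsRatioDeriv2 c (u₀ + B) := by
    refine pottsRatioDeriv2_pos hc ?_
    rw [← lt_log_iff_exp_lt ((exp_pos B).trans hBc)]
    linarith [hu₀.2]
  obtain ⟨s, hs, hs_pos⟩ := exists_integral_Ioi_pos_of_div_le hm hb
    (fun t ht => integrableOn_Ioi_rpow_mul_pottsRatioDeriv2 hc (by linarith : (3 : ℝ) ≤ τ) ht)
    fun u hu => by
      have hu0 := hu.1
      have hpow : u⁻¹ ≤ u ^ (3 - τ) := by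
        rw [← rpow_neg_one]
        exact rpow_le_rpow_of_exponent_ge hu0 (hu.2.trans hb1) (by linarith)
      rw [div_eq_inv_mul]
      exact mul_le_mul hpow (hmin ⟨hu0.le, hu.2⟩) hm.le (rpow_nonneg hu0.le _)
  exact ⟨s, ⟨hs.1, hs.2.trans hbA⟩, hs_pos⟩

lemma exists_sign_change_integral_Ioi_rpow_mul_pottsRatioDeriv2 (hBc : exp B < c - 1)
    (hτ : 4 ≤ τ) :
    ∃ tstar, 0 < tstar ∧
      (∀ t, 0 < t → t < tstar → 0 < ∫ u in Ioi t, u ^ (3 - τ) * pottsRatioDeriv2 c (u + B)) ∧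
      ∀ t, tstar < t → ∫ u in Ioi t, u ^ (3 - τ) * pottsRatioDeriv2 c (u + B) < 0 := by
  have hc : 1 ≤ c := by linarith [exp_pos B]
  have hc1 : 0 < c - 1 := (exp_pos B).trans hBc
  refine exists_sign_change_integral_Ioi
    (fun t ht => integrableOn_Ioi_rpow_mul_pottsRatioDeriv2 hc (by linarith : (3 : ℝ) ≤ τ) ht)
    (fun u hu => mul_pos (rpow_pos_of_pos hu.1 _) (pottsRatioDeriv2_pos hc ?_))
    (fun u hu => ?_) (exists_integral_Ioi_rpow_mul_pottsRatioDeriv2_pos hBc hτ)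
  · rw [← lt_log_iff_exp_lt hc1]; linarith [hu.2]
  · have hu0 : 0 < u := by linarith [sub_pos.2 ((lt_log_iff_exp_lt hc1).2 hBc)]
    refine mul_neg_of_pos_of_neg (rpow_pos_of_pos hu0 _) (pottsRatioDeriv2_neg hc ?_)
    rw [← log_lt_iff_lt_exp hc1]; linarith

end ParetoPotts

lemma Ffun_eq_weightedIntegral {Ω : Type*} [MeasurableSpace Ω] {μ : Measure Ω} {W : Ω → ℝ}
    (hW : Measurable W) {τ : ℝ} (hτ : 2 < τ) (hlaw : μ.map W = paretoMeasure τ) (q : ℕ)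
    (B : ℝ) : Ffun μ W q B = fun t => (τ - 2) * weightedIntegral (1 - τ) B (pottsRatio q) t := by
  have hmean : ∫ ω, W ω ∂μ = (τ - 1) / (τ - 2) := by
    rw [← integral_id_paretoMeasure hτ, ← hlaw]
    exact (integral_map hW.aemeasurable aestronglyMeasurable_id).symm
  funext t
  have hdens : ∀ x ∈ Ioi (1 : ℝ), (τ - 1) * x ^ (-τ) * (x / ((τ - 1) / (τ - 2)) *
      pottsRatio q (t * x + B)) = (τ - 2) * (x ^ (1 - τ) * pottsRatio q (t * x + B)) := by
    intro x hx
    rw [show 1 - τ = -τ + 1 by ring, rpow_add_one (zero_lt_one.trans hx).ne']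
    field_simp [show τ - 1 ≠ 0 by linarith, show τ - 2 ≠ 0 by linarith]
  simp only [Ffun, hmean, mul_div_assoc]
  rw [weightedIntegral, ← integral_const_mul, ← setIntegral_congr_fun measurableSet_Ioi hdens,
    ← integral_paretoMeasure (by linarith), ← hlaw,
    integral_map hW.aemeasurable (by unfold pottsRatio; fun_prop)]
  rfl

theorem pareto_tau_ge_four_zero_crossing_general
    {Ω : Type*} [MeasurableSpace Ω] (μ : Measure Ω)
    (W : Ω → ℝ) (hWmeas : Measurable W)
    (q : ℕ) (B : ℝ)
    (hBq : 1 < Real.exp (-B) * ((q : ℝ) - 1))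
    (τ : ℝ) (hτ : 4 ≤ τ)
    -- `W` is Pareto with parameter `τ`: its law has density `(τ−1)w^{−τ}` on `[1,∞)`
    (hlaw : μ.map W = (volume : Measure ℝ).withDensity
      (fun x => ENNReal.ofReal
        (Set.indicator (Set.Ici (1 : ℝ)) (fun v => (τ - 1) * v ^ (-τ)) x))) :
    ∃ tstar : ℝ, 0 < tstar ∧
      (∀ t : ℝ, 0 < t → t < tstar → 0 < deriv (deriv (Ffun μ W q B)) t) ∧
      (∀ t : ℝ, tstar < t → deriv (deriv (Ffun μ W q B)) t < 0) := by
  have hexpB : exp B < q - 1 := by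
    rwa [exp_neg, inv_mul_eq_div, one_lt_div (exp_pos B)] at hBq
  have hq2 : (2 : ℝ) ≤ q := by
    have : 1 < q := by exact_mod_cast (show (1 : ℝ) < q by linarith [exp_pos B])
    exact_mod_cast this
  have hF' : deriv (Ffun μ W q B) =
      fun t => (τ - 2) * weightedIntegral (2 - τ) B (pottsRatioDeriv q) t := by
    rw [Ffun_eq_weightedIntegral hWmeas (by linarith) hlaw]
    exact funext fun t =>
      ((hasDerivAt_weightedIntegral_pottsRatio hq2 (by linarith) t).const_mul _).deriv
  have hF'' : ∀ t, 0 < t → deriv (deriv (Ffun μ W q B)) t = (τ - 2) *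
      (t ^ (τ - 4) * ∫ u in Ioi t, u ^ (3 - τ) * pottsRatioDeriv2 q (u + B)) := fun t ht => by
    rw [hF', ((hasDerivAt_weightedIntegral_pottsRatioDeriv hq2 (by linarith) ht).const_mul _).deriv,
      weightedIntegral_eq_rpow_mul_integral_Ioi _ _ _ ht, show -(3 - τ) - 1 = τ - 4 by ring]
  obtain ⟨tstar, htstar, hpos, hneg⟩ :=
    exists_sign_change_integral_Ioi_rpow_mul_pottsRatioDeriv2 hexpB hτ
  refine ⟨tstar, htstar, fun t ht htlt => ?_, fun t htlt => ?_⟩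
  · rw [hF'' t ht]
    have hH := hpos t ht htlt
    have hτ2 : (0 : ℝ) < τ - 2 := by linarith
    positivity
  · rw [hF'' t (htstar.trans htlt)]
    exact mul_neg_of_pos_of_neg (by linarith)
      (mul_neg_of_pos_of_neg (rpow_pos_of_pos (htstar.trans htlt) _) (hneg t htlt))

/-- **Pareto weights with `τ ≥ 4`** satisfy the unique zero-crossing condition:
`𝓕_B''` is first positive and then negative. -/
theorem pareto_tau_ge_four_zero_crossing
    {Ω : Type*} [MeasurableSpace Ω] (μ : Measure Ω) [IsProbabilityMeasure μ]
    (W : Ω → ℝ) (hWmeas : Measurable W)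
    (q : ℕ) (hq : 3 ≤ q) (B : ℝ) (hB : 0 ≤ B)
    (hBq : 1 < Real.exp (-B) * ((q : ℝ) - 1))
    (τ : ℝ) (hτ : 4 ≤ τ)
    -- `W` is Pareto with parameter `τ`: its law has density `(τ−1)w^{−τ}` on `[1,∞)`
    (hlaw : μ.map W = (volume : Measure ℝ).withDensity
      (fun x => ENNReal.ofReal
        (Set.indicator (Set.Ici (1 : ℝ)) (fun v => (τ - 1) * v ^ (-τ)) x))) :
    ∃ tstar : ℝ, 0 < tstar ∧
      (∀ t : ℝ, 0 < t → t < tstar → 0 < deriv (deriv (Ffun μ W q B)) t) ∧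
      (∀ t : ℝ, tstar < t → deriv (deriv (Ffun μ W q B)) t < 0) :=
  pareto_tau_ge_four_zero_crossing_general μ W hWmeas q B hBq τ hτ hlaw
end
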